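/- arXiv:2602.06701 — 3 statements merged into one kernel-verified Lean document; each statement's English description precedes it below -/
import Mathlib

section
/- For all real x, y, the polynomial φ(x,y) = −36x⁴ − 36x³y − 36x²y² − 36xy³ − 36y⁴ + 4x² + 4y² satisfies φ(x,y) ≤ 4/9. -/
/-- the polynomial `φ(x,y) = −36x⁴ − 36x³y − 36x²y² − 36xy³ − 36y⁴ + 4x² + 4y²`
is bounded above by `4/9`. -/
theorem poly_bound (x y : ℝ) :
    -36 * x ^ 4 - 36 * x ^ 3 * y - 36 * x ^ 2 * y ^ 2 - 36 * x * y ^ 3 - 36 * y ^ 4 +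
        4 * x ^ 2 + 4 * y ^ 2 ≤ 4 / 9 := by
  nlinarith [sq_nonneg (x^2 + y^2 - 2/9), mul_nonneg (sq_nonneg (x - y)) (sq_nonneg (x + y)),
    mul_nonneg (add_nonneg (sq_nonneg x) (sq_nonneg y)) (sq_nonneg (x + y)), sq_nonneg (x + y),
    sq_nonneg (x - y)]
end

section
/- For all real x and all probability measures μ on R with finite second moment, 2x·(−18x⁵ − x^{1/3}m⁴ + 2) + (x² + m)² ≤ 6 + 2‖μ‖₂², where m = ∫ x μ(dx) and ‖μ‖₂² = ∫ x² μ(dx). Here x^{1/3} denotes the real cube root of x. -/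
open MeasureTheory

/-- The real cube root. -/
noncomputable def cbrt (x : ℝ) : ℝ := Real.sign x * |x| ^ ((1 : ℝ) / 3)

lemma cbrt_mul_nonneg (x : ℝ) : 0 ≤ x * cbrt x := by
  rcases lt_trichotomy x 0 with h | h | h
  · rw [cbrt, Real.sign_of_neg h]
    have : 0 ≤ |x| ^ ((1:ℝ)/3) := Real.rpow_nonneg (abs_nonneg x) _
    nlinarith
  · simp [h, cbrt]
  · rw [cbrt, Real.sign_of_pos h]
    have : 0 ≤ |x| ^ ((1:ℝ)/3) := Real.rpow_nonneg (abs_nonneg x) _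
    nlinarith

/-- coercivity condition for `b(x,μ) = −18x⁵ − x^{1/3} m⁴ + 2`,
`σ(x,μ) = x² + m`: `2x b(x,μ) + σ(x,μ)² ≤ 6 + 2‖μ‖₂²`. -/
theorem coercivity_example (x : ℝ) (μ : Measure ℝ) (hμ : IsProbabilityMeasure μ)
    (h2 : Integrable (fun y => y ^ 2) μ) :
    2 * x * (-18 * x ^ 5 - cbrt x * (∫ y, y ∂μ) ^ 4 + 2) + (x ^ 2 + ∫ y, y ∂μ) ^ 2 ≤
      6 + 2 * ∫ y, y ^ 2 ∂μ := by
  set m := ∫ y, y ∂μ with hm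
  have hy : Integrable (fun y => y) μ := by
    have h1 : Integrable (fun y : ℝ => y ^ 2 + 1) μ := h2.add (integrable_const 1)
    refine h1.mono ?_ ?_
    · exact measurable_id.aestronglyMeasurable
    · refine ae_of_all _ fun y => ?_
      rw [Real.norm_eq_abs, Real.norm_eq_abs]
      rw [abs_of_nonneg (by positivity : (0:ℝ) ≤ y ^ 2 + 1)]
      nlinarith [sq_nonneg (|y| - 1), sq_abs y]
  have hm2 : m ^ 2 ≤ ∫ y, y ^ 2 ∂μ := by
    have hnn : 0 ≤ ∫ y, (y - m) ^ 2 ∂μ :=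
      integral_nonneg fun y => sq_nonneg _
    have hint : ∫ y, (y - m) ^ 2 ∂μ = (∫ y, y ^ 2 ∂μ) - m ^ 2 := by
      have : (fun y : ℝ => (y - m) ^ 2) = fun y => y ^ 2 - (2 * m) * y + m ^ 2 := by
        funext y; ring
      rw [this]
      have ha : Integrable (fun y : ℝ => y ^ 2 - 2 * m * y) μ := h2.sub (hy.const_mul (2 * m))
      have hb : Integrable (fun y : ℝ => 2 * m * y) μ := hy.const_mul (2 * m)
      rw [integral_add ha (integrable_const _), integral_sub h2 hb,
        MeasureTheory.integral_const_mul, integral_const]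
      simp [hm]
      ring
    linarith
  have hcb : 0 ≤ x * cbrt x := cbrt_mul_nonneg x
  have hcb4 : 0 ≤ x * cbrt x * m ^ 4 := mul_nonneg hcb (by positivity)
  nlinarith [hm2, hcb4, sq_nonneg (x ^ 2 - m), sq_nonneg (x ^ 3 - x), sq_nonneg (x - 1),
    sq_nonneg (x ^ 2 - 1), sq_nonneg x, sq_nonneg (x ^ 3 - 1), sq_nonneg (x + 1)]
end

section
/- For all real x, y and probability measures μ, ν on R with finite 6th moments, letting m_μ = ∫x dμ, m_ν = ∫y dν, b(x,μ) = −18x⁵ − x^{1/3}m_μ⁴ + 2 and σ(x,μ) = x² + m_μ, one has 2(x−y)(b(x,μ)−b(y,ν)) + (σ(x,μ)−σ(y,ν))² ≤ (2 + |y|^{2/3} + 2‖μ‖₆⁶ + 2‖ν‖₆⁶)(|x−y|² + W₂²(μ,ν)). -/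
/-!
Write `a, c` for the means of `μ, ν`. The drift difference splits as
`-18 (x⁵ - y⁵) - (∛x - ∛y) a⁴ - ∛y (a⁴ - c⁴)`: the middle term has the sign of `y - x`
because the cube root is monotone, and the last is handled by Young's inequality together
with `a⁴ - c⁴ = (a - c)(a³ + a²c + ac² + c³)` and `(a³ + a²c + ac² + c³)² ≤ 8 (a⁶ + c⁶)`.
What remains is a polynomial inequality in `x, y, ∛y` in which the dissipative quintic drift
absorbs the growth of the diffusion coefficient. Finally `a⁶ ≤ ‖μ‖₆⁶` by Jensen, and
`|a - c| ≤ W₂(μ, ν)` because the means of the marginals of any coupling `π` differ by at most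
`∫ |z₁ - z₂| dπ ≤ (∫ |z₁ - z₂|² dπ)^{1/2}`.
-/

open MeasureTheory

/-- The `p`-Wasserstein distance defined as an infimum over couplings. -/
noncomputable def wasserstein {E : Type*} [NormedAddCommGroup E] [MeasurableSpace E]
    (p : ℝ) (μ ν : Measure E) : ℝ :=
  sInf {r : ℝ | ∃ π : Measure (E × E), π.map Prod.fst = μ ∧ π.map Prod.snd = ν ∧
    r = (∫ z, ‖z.1 - z.2‖ ^ p ∂π) ^ (1 / p)}

theorem cbrt_pow_three (x : ℝ) : cbrt x ^ 3 = x := by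
  have h : (|x| ^ ((1 : ℝ) / 3)) ^ 3 = |x| := by
    rw [← Real.rpow_natCast, ← Real.rpow_mul (abs_nonneg x)]
    norm_num
  rcases lt_trichotomy x 0 with hx | rfl | hx
  · rw [cbrt, mul_pow, h, Real.sign_of_neg hx, abs_of_neg hx]
    ring
  · simp [cbrt]
  · rw [cbrt, mul_pow, h, Real.sign_of_pos hx, abs_of_pos hx]
    ring

theorem cbrt_sq (x : ℝ) : cbrt x ^ 2 = |x| ^ ((2 : ℝ) / 3) := by
  have h : (|x| ^ ((1 : ℝ) / 3)) ^ 2 = |x| ^ ((2 : ℝ) / 3) := by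
    rw [← Real.rpow_natCast, ← Real.rpow_mul (abs_nonneg x)]
    norm_num
  rcases lt_trichotomy x 0 with hx | rfl | hx
  · rw [cbrt, mul_pow, h, Real.sign_of_neg hx]
    ring
  · simp [cbrt]
  · rw [cbrt, mul_pow, h, Real.sign_of_pos hx]
    ring

theorem cbrt_monotone : Monotone cbrt := fun u v huv => by
  rwa [← (Odd.strictMono_pow (R := ℝ) (by decide : Odd 3)).le_iff_le, cbrt_pow_three,
    cbrt_pow_three]

theorem Monotone.sub_mul_sub_nonneg {R : Type*} [Ring R] [LinearOrder R] [IsOrderedRing R]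
    {f : R → R} (hf : Monotone f) (x y : R) :
    0 ≤ (x - y) * (f x - f y) := by
  rcases le_total y x with h | h
  · exact mul_nonneg (sub_nonneg.2 h) (sub_nonneg.2 (hf h))
  · exact mul_nonneg_of_nonpos_of_nonpos (sub_nonpos.2 h) (sub_nonpos.2 (hf h))

theorem quartic_bound (x y t : ℝ) (ht : t ^ 3 = y) :
    -36 * (x ^ 4 + x ^ 3 * y + x ^ 2 * y ^ 2 + x * y ^ 3 + y ^ 4) + 2 * (x + y) ^ 2 + 3 * t ^ 2
      ≤ 2 := by
  have ht6 : t ^ 6 = y ^ 2 := by rw [← ht]; ring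
  -- AM-GM with the tangent point `t ^ 2 = 7 / 9`
  have hyoung : 3 * t ^ 2 ≤ 14 / 9 + 81 / 49 * y ^ 2 := by
    nlinarith [mul_nonneg (sq_nonneg (t ^ 2 - 7 / 9)) (by positivity : (0 : ℝ) ≤ t ^ 2 + 14 / 9)]
  have hpoly : -36 * (x ^ 4 + x ^ 3 * y + x ^ 2 * y ^ 2 + x * y ^ 3 + y ^ 4) + 2 * (x + y) ^ 2
      + 81 / 49 * y ^ 2 ≤ 4 / 9 := by
    nlinarith [sq_nonneg (x + y), sq_nonneg (x - y), sq_nonneg (x ^ 2 + y ^ 2),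
      sq_nonneg (x ^ 2 - y ^ 2), sq_nonneg (x * y),
      sq_nonneg (x ^ 2 + y ^ 2 - 1 / 3), sq_nonneg (x ^ 2 + y ^ 2 + x * y - 1 / 3)]
  linarith

theorem sq_sum_cubes_le (a c : ℝ) :
    (a ^ 3 + a ^ 2 * c + a * c ^ 2 + c ^ 3) ^ 2 ≤ 8 * (a ^ 6 + c ^ 6) := by
  nlinarith [sq_nonneg (a - c), sq_nonneg (a + c), sq_nonneg (a ^ 2 - c ^ 2), sq_nonneg (a * c),
    mul_nonneg (sq_nonneg (a - c)) (sq_nonneg (a + c)), sq_nonneg (a ^ 3 - c ^ 3)]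

theorem neg_two_mul_mul_sub_pow_four_le (u s a c : ℝ) :
    -2 * u * s * (a ^ 4 - c ^ 4) ≤ 4 * s ^ 2 * u ^ 2 + 2 * (a ^ 6 + c ^ 6) * (a - c) ^ 2 := by
  set q := a ^ 3 + a ^ 2 * c + a * c ^ 2 + c ^ 3
  have hfactor : a ^ 4 - c ^ 4 = (a - c) * q := by ring
  have hq : (a - c) ^ 2 * q ^ 2 ≤ 8 * (a ^ 6 + c ^ 6) * (a - c) ^ 2 := by
    nlinarith [mul_le_mul_of_nonneg_left (sq_sum_cubes_le a c) (sq_nonneg (a - c))]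
  rw [hfactor]
  nlinarith [sq_nonneg (2 * u * s + (a - c) * q / 2)]

noncomputable def drift (x m : ℝ) : ℝ := -18 * x ^ 5 - cbrt x * m ^ 4 + 2

def diffusion (x m : ℝ) : ℝ := x ^ 2 + m

theorem monotonicity_gap_le (x y a c : ℝ) :
    2 * (x - y) * (drift x a - drift y c) + (diffusion x a - diffusion y c) ^ 2 ≤
      (2 + cbrt y ^ 2 + 2 * a ^ 6 + 2 * c ^ 6) * ((x - y) ^ 2 + (a - c) ^ 2) := by
  set P := x ^ 4 + x ^ 3 * y + x ^ 2 * y ^ 2 + x * y ^ 3 + y ^ 4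
  set t := cbrt y
  have hdrift : 2 * (x - y) * (drift x a - drift y c) = -36 * P * (x - y) ^ 2
      - 2 * ((x - y) * (cbrt x - t)) * a ^ 4 - 2 * (x - y) * t * (a ^ 4 - c ^ 4) := by
    simp only [drift, P, t]
    ring
  have hdiffusion : (diffusion x a - diffusion y c) ^ 2 ≤ 2 * (x + y) ^ 2 * (x - y) ^ 2
      + 2 * (a - c) ^ 2 := by
    have := add_sq_le (a := (x + y) * (x - y)) (b := a - c)
    simp only [diffusion]
    linarith [show (x ^ 2 + a - (y ^ 2 + c)) = (x + y) * (x - y) + (a - c) by ring]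
  have hmono : 0 ≤ (x - y) * (cbrt x - t) * a ^ 4 :=
    mul_nonneg (cbrt_monotone.sub_mul_sub_nonneg x y) (by positivity)
  have hcross := neg_two_mul_mul_sub_pow_four_le (x - y) t a c
  have hquartic := mul_le_mul_of_nonneg_right (quartic_bound x y t (cbrt_pow_three y))
    (sq_nonneg (x - y))
  have hslack : 0 ≤ 2 * (a ^ 6 + c ^ 6) * (x - y) ^ 2 + t ^ 2 * (a - c) ^ 2 := by positivity
  linarith

section Moments

variable {α : Type*} [MeasurableSpace α] {μ : Measure α}

theorem pow_integral_le_integral_pow [IsProbabilityMeasure μ] {f : α → ℝ} {n : ℕ} (hn : Even n)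
    (hf : Integrable f μ) (hfn : Integrable (fun x => f x ^ n) μ) :
    (∫ x, f x ∂μ) ^ n ≤ ∫ x, f x ^ n ∂μ :=
  hn.convexOn_pow.map_integral_le (continuous_pow n).continuousOn isClosed_univ
    (.of_forall fun _ => Set.mem_univ _) hf hfn

theorem memLp_of_integrable_norm_pow {β : Type*} [NormedAddCommGroup β] {f : α → β} {n : ℕ}
    (hf : AEStronglyMeasurable f μ) (hn : n ≠ 0) (h : Integrable (fun x => ‖f x‖ ^ n) μ) :
    MemLp f n μ :=
  (integrable_norm_rpow_iff hf (by exact_mod_cast hn) (by simp)).1 (by simpa using h)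

end Moments

theorem integral_id_pow_le_integral_abs_pow {ρ : Measure ℝ} [IsProbabilityMeasure ρ] {n : ℕ}
    (hn : Even n) (hn₀ : n ≠ 0) (h : MemLp id n ρ) :
    (∫ z, z ∂ρ) ^ n ≤ ∫ z, |z| ^ n ∂ρ := by
  have hpow : Integrable (fun z : ℝ => z ^ n) ρ := by
    simpa [hn.pow_abs] using h.integrable_norm_pow hn₀
  simpa [hn.pow_abs] using
    pow_integral_le_integral_pow hn (h.integrable (mod_cast Nat.one_le_iff_ne_zero.2 hn₀)) hpow

theorem norm_integral_sub_integral_le_wasserstein_two {E : Type*} [NormedAddCommGroup E]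
    [NormedSpace ℝ E] [CompleteSpace E] [MeasurableSpace E] {μ ν : Measure E}
    [IsProbabilityMeasure μ] [IsProbabilityMeasure ν] (hμ : MemLp id 2 μ) (hν : MemLp id 2 ν) :
    ‖∫ z, z ∂μ - ∫ z, z ∂ν‖ ≤ wasserstein 2 μ ν := by
  refine le_csInf ⟨_, μ.prod ν, by simp, by simp, rfl⟩ ?_
  rintro r ⟨π, rfl, rfl, rfl⟩
  have : IsProbabilityMeasure π := Measure.isProbabilityMeasure_of_map Prod.fst
  have h₁ : MemLp Prod.fst 2 π := (memLp_map_measure_iff hμ.1 measurable_fst.aemeasurable).1 hμ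
  have h₂ : MemLp Prod.snd 2 π := (memLp_map_measure_iff hν.1 measurable_snd.aemeasurable).1 hν
  have hsub : MemLp (fun z : E × E => z.1 - z.2) 2 π := h₁.sub h₂
  rw [integral_map (f := fun z => z) measurable_fst.aemeasurable hμ.1,
    integral_map (f := fun z => z) measurable_snd.aemeasurable hν.1,
    ← integral_sub (h₁.integrable one_le_two) (h₂.integrable one_le_two), ← Real.sqrt_eq_rpow]
  simp only [Real.rpow_two]
  refine Real.le_sqrt_of_sq_le ?_
  calc ‖∫ z, z.1 - z.2 ∂π‖ ^ 2 ≤ (∫ z, ‖z.1 - z.2‖ ∂π) ^ 2 := by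
        gcongr
        exact norm_integral_le_integral_norm _
    _ ≤ ∫ z, ‖z.1 - z.2‖ ^ 2 ∂π :=
        pow_integral_le_integral_pow even_two (hsub.integrable one_le_two).norm
          (hsub.integrable_norm_pow two_ne_zero)

/-- locally monotone condition for the example MVSDE with
`b(x,μ) = −18x⁵ − x^{1/3}m_μ⁴ + 2` and `σ(x,μ) = x² + m_μ`. -/
theorem locally_monotone_example (x y : ℝ) (μ ν : Measure ℝ)
    (hμ : IsProbabilityMeasure μ) (hν : IsProbabilityMeasure ν)
    (h6μ : Integrable (fun z => |z| ^ (6 : ℕ)) μ) (h6ν : Integrable (fun z => |z| ^ (6 : ℕ)) ν) :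
    2 * (x - y) *
        ((-18 * x ^ 5 - cbrt x * (∫ z, z ∂μ) ^ 4 + 2) -
          (-18 * y ^ 5 - cbrt y * (∫ z, z ∂ν) ^ 4 + 2)) +
      ((x ^ 2 + ∫ z, z ∂μ) - (y ^ 2 + ∫ z, z ∂ν)) ^ 2 ≤
      (2 + |y| ^ ((2 : ℝ) / 3) + 2 * (∫ z, |z| ^ (6 : ℕ) ∂μ) + 2 * (∫ z, |z| ^ (6 : ℕ) ∂ν)) *
        ((x - y) ^ 2 + (wasserstein 2 μ ν) ^ 2) := by
  have hLpμ : MemLp id 6 μ :=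
    memLp_of_integrable_norm_pow aestronglyMeasurable_id (by norm_num) (by simpa using h6μ)
  have hLpν : MemLp id 6 ν :=
    memLp_of_integrable_norm_pow aestronglyMeasurable_id (by norm_num) (by simpa using h6ν)
  have hW := norm_integral_sub_integral_le_wasserstein_two (hLpμ.mono_exponent (by norm_num))
    (hLpν.mono_exponent (by norm_num))
  calc _ ≤ (2 + cbrt y ^ 2 + 2 * (∫ z, z ∂μ) ^ 6 + 2 * (∫ z, z ∂ν) ^ 6) *
          ((x - y) ^ 2 + ‖∫ z, z ∂μ - ∫ z, z ∂ν‖ ^ 2) := by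
        rw [Real.norm_eq_abs, sq_abs]
        exact monotonicity_gap_le x y _ _
    _ ≤ _ := by
        rw [cbrt_sq]
        gcongr
        · exact integral_id_pow_le_integral_abs_pow (by decide) (by norm_num) hLpμ
        · exact integral_id_pow_le_integral_abs_pow (by decide) (by norm_num) hLpν
end
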